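/- Segment inequality implies L¹-Poincaré: let (X,d,m) be a metric measure space, B_R ⊂ X a ball, and suppose that for each pair (x,y) ∈ B_R × B_R there is a probability measure λ_{xy} on geodesics from x to y such that for all nonnegative measurable g: ∫_{B_R}∫_{B_R}∫_{Γ(x,y)}∫₀¹ g(γ(t)) dt dλ_{xy} dm(x) dm(y) ≤ C·m(B_R)·∫_{B_{2R}} g dm. Then for any f with upper gradient h: ∫_{B_R}∫_{B_R} |f(x)-f(y)|/d(x,y) dm(x) dm(y) ≤ C·m(B_R)·∫_{B_{2R}} h dm. -/

import Mathlib

/-!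
Along a geodesic `γ : [0,1] → X` from `x` to `y`, the unit-speed reparametrization
`s ↦ γ (s / d(x,y))` is admissible in the definition of an upper gradient, and the substitution
`s = d(x,y) t` turns the upper-gradient inequality into
`|f x - f y| / d(x,y) ≤ ∫₀¹ h (γ t) dt`. Averaging over `λ_{xy}` and integrating over
`B_R × B_R` bounds the left-hand side by the left-hand side of the segment inequality for `g = h`.
-/

open MeasureTheory Set Metric

def IsGeodesic {X : Type*} [MetricSpace X] (γ : ℝ → X) : Prop :=
  ∀ s ∈ Set.Icc (0:ℝ) 1, ∀ t ∈ Set.Icc (0:ℝ) 1,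
    dist (γ s) (γ t) = |s - t| * dist (γ 0) (γ 1)

def IsUpperGradient {X : Type*} [MetricSpace X] (f : X → ℝ) (h : X → ENNReal) :
    Prop :=
  ∀ x y : X, ∀ σ : ℝ → X, σ 0 = x → σ (dist x y) = y →
    (∀ s ∈ Set.Icc 0 (dist x y), ∀ t ∈ Set.Icc 0 (dist x y),
      dist (σ s) (σ t) = |s - t|) →
    ENNReal.ofReal |f x - f y| ≤ ∫⁻ s in Set.Icc 0 (dist x y), h (σ s)

theorem setLIntegral_Icc_zero_eq_ofReal_mul {d : ℝ} (hd : 0 < d) (g : ℝ → ENNReal) :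
    ∫⁻ s in Icc 0 d, g s = ENNReal.ofReal d * ∫⁻ t in Icc (0 : ℝ) 1, g (d * t) := by
  have himage : (d * ·) '' Icc (0 : ℝ) 1 = Icc 0 d := by
    simp [image_mul_left_Icc' hd]
  rw [← himage, lintegral_image_eq_lintegral_abs_deriv_mul measurableSet_Icc
      (fun t _ => (hasDerivAt_const_mul d).hasDerivWithinAt) (mul_right_injective₀ hd.ne').injOn,
    abs_of_pos hd, lintegral_const_mul' _ _ ENNReal.ofReal_ne_top]

theorem IsGeodesic.dist_comp_div {X : Type*} [MetricSpace X] {γ : ℝ → X} (hγ : IsGeodesic γ)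
    (hd : 0 < dist (γ 0) (γ 1)) {s t : ℝ} (hs : s ∈ Icc 0 (dist (γ 0) (γ 1)))
    (ht : t ∈ Icc 0 (dist (γ 0) (γ 1))) :
    dist (γ (s / dist (γ 0) (γ 1))) (γ (t / dist (γ 0) (γ 1))) = |s - t| := by
  have mem_unit : ∀ u ∈ Icc 0 (dist (γ 0) (γ 1)), u / dist (γ 0) (γ 1) ∈ Icc (0 : ℝ) 1 :=
    fun u hu => ⟨div_nonneg hu.1 hd.le, (div_le_one hd).mpr hu.2⟩
  rw [hγ _ (mem_unit s hs) _ (mem_unit t ht), ← sub_div, abs_div, abs_of_pos hd,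
    div_mul_cancel₀ _ hd.ne']

theorem IsUpperGradient.ofReal_div_dist_le_lintegral {X : Type*} [MetricSpace X] {f : X → ℝ}
    {h : X → ENNReal} (hug : IsUpperGradient f h) {γ : ℝ → X} (hγ : IsGeodesic γ) :
    ENNReal.ofReal (|f (γ 0) - f (γ 1)| / dist (γ 0) (γ 1)) ≤
      ∫⁻ t in Icc (0 : ℝ) 1, h (γ t) := by
  rcases (dist_nonneg (x := γ 0) (y := γ 1)).eq_or_lt with hd | hd
  · -- coincident endpoints: the left side is `ofReal (_ / 0) = 0`
    simp [← hd]
  set d := dist (γ 0) (γ 1)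
  have unit_speed := hug (γ 0) (γ 1) (fun s => γ (s / d)) (by simp) (by simp [d, hd.ne'])
    fun s hs t ht => hγ.dist_comp_div hd hs ht
  rw [setLIntegral_Icc_zero_eq_ofReal_mul hd] at unit_speed
  simp only [mul_div_cancel_left₀ _ hd.ne'] at unit_speed
  rwa [ENNReal.ofReal_div_of_pos hd, ENNReal.div_le_iff_le_mul (.inl (by simpa using hd))
    (.inl ENNReal.ofReal_ne_top), mul_comm]

/-- Segment inequality implies the weak local `L¹`-Poincaré inequality. -/
theorem segment_implies_poincare {X : Type*} [MetricSpace X]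
    [MeasurableSpace X] [BorelSpace X] (m : Measure X) (x₀ : X) (R : ℝ)
    (Λ : X → X → Measure (ℝ → X))
    (hΛ : ∀ x ∈ ball x₀ R, ∀ y ∈ ball x₀ R, IsProbabilityMeasure (Λ x y) ∧
        ∀ᵐ γ ∂(Λ x y), IsGeodesic γ ∧ γ 0 = x ∧ γ 1 = y)
    (C : ENNReal)
    (hseg : ∀ g : X → ENNReal, Measurable g →
        ∫⁻ x in ball x₀ R, ∫⁻ y in ball x₀ R,
            ∫⁻ γ, (∫⁻ t in Set.Icc (0:ℝ) 1, g (γ t)) ∂(Λ x y) ∂m ∂m ≤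
          C * m (ball x₀ R) * ∫⁻ z in ball x₀ (2 * R), g z ∂m)
    (f : X → ℝ) (h : X → ENNReal) (hh : Measurable h)
    (hug : IsUpperGradient f h) :
    ∫⁻ x in ball x₀ R, ∫⁻ y in ball x₀ R,
        ENNReal.ofReal (|f x - f y| / dist x y) ∂m ∂m ≤
      C * m (ball x₀ R) * ∫⁻ z in ball x₀ (2 * R), h z ∂m := by
  refine le_trans ?_ (hseg h hh)
  refine setLIntegral_mono' measurableSet_ball fun x hx => ?_
  refine setLIntegral_mono' measurableSet_ball fun y hy => ?_
  obtain ⟨hprob, hgeod⟩ := hΛ x hx y hy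
  calc ENNReal.ofReal (|f x - f y| / dist x y)
      = ∫⁻ _, ENNReal.ofReal (|f x - f y| / dist x y) ∂(Λ x y) := by simp
    _ ≤ ∫⁻ γ, (∫⁻ t in Icc (0 : ℝ) 1, h (γ t)) ∂(Λ x y) := by
      refine lintegral_mono_ae ?_
      filter_upwards [hgeod] with γ ⟨hγ, rfl, rfl⟩
      exact hug.ofReal_div_dist_le_lintegral hγ
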